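/- Under the state-space model conditions with twice differentiability and dominated differentiation, (d²/dy_t²) log p(y_t|y_{1:t-1},θ) + ((d/dy_t) log p(y_t|y_{1:t-1},θ))² = E[ (d²/dy_t²) log g_θ(y_t|X_t) + ((d/dy_t) log g_θ(y_t|X_t))² | y_{1:t}, θ ], expectation over the filtering distribution X_t ~ p(dx_t|y_{1:t},θ). -/

import Mathlib

open MeasureTheory Filter Topology

/- For nonvanishing `f`, `(log f)'' + ((log f)')² = f'' / f`. Applied to the predictive
density `p(y) = ∫ predd · g(y, ·)` and to each `g(·, x)`, this reduces the identity to
`p'' = ∫ predd · ∂²g/∂y²`, i.e. to differentiating twice under the integral sign, the two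
dominating functions `h3`, `h4` providing the required bounds. -/

theorem deriv_deriv_log_add_sq_deriv_log {f f' : ℝ → ℝ} {f'' y₀ : ℝ}
    (hf : ∀ᶠ y in 𝓝 y₀, HasDerivAt f (f' y) y ∧ f y ≠ 0) (hf' : HasDerivAt f' f'' y₀) :
    deriv (deriv fun y => Real.log (f y)) y₀ + (deriv (fun y => Real.log (f y)) y₀) ^ 2 =
      f'' / f y₀ := by
  have hlog : deriv (fun y => Real.log (f y)) =ᶠ[𝓝 y₀] fun y => f' y / f y :=
    hf.mono fun y hy => (hy.1.log hy.2).deriv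
  obtain ⟨hf₀, hne₀⟩ := hf.self_of_nhds
  have hquot : HasDerivAt (fun y => f' y / f y) ((f'' * f y₀ - f' y₀ * f' y₀) / f y₀ ^ 2) y₀ :=
    hf'.div hf₀ hne₀
  rw [hlog.deriv_eq, hlog.self_of_nhds, hquot.deriv]
  field_simp
  ring

theorem deriv_deriv_log_add_sq_deriv_log_of_contDiff {f : ℝ → ℝ} (hf : ContDiff ℝ 2 f)
    (hpos : ∀ y, f y ≠ 0) (y₀ : ℝ) :
    deriv (deriv fun y => Real.log (f y)) y₀ + (deriv (fun y => Real.log (f y)) y₀) ^ 2 =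
      deriv (deriv f) y₀ / f y₀ := by
  obtain ⟨hf_diff, -, hf'⟩ := contDiff_succ_iff_deriv.mp (show ContDiff ℝ (1 + 1) f from hf)
  exact deriv_deriv_log_add_sq_deriv_log
    (Eventually.of_forall fun y => ⟨(hf_diff y).hasDerivAt, hpos y⟩)
    ((hf'.differentiable one_ne_zero) y₀).hasDerivAt

theorem integral_mul_pos_of_integral_pos {X : Type*} [MeasurableSpace X] {η : Measure X}
    {f g : X → ℝ} (hf : 0 ≤ f) (hf_pos : 0 < ∫ x, f x ∂η) (hg : ∀ x, 0 < g x)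
    (hfg : Integrable (fun x => f x * g x) η) : 0 < ∫ x, f x * g x ∂η := by
  have hf_int : Integrable f η := .of_integral_ne_zero hf_pos.ne'
  have hsupp : Function.support (fun x => f x * g x) = Function.support f := by
    ext x
    simp [(hg x).ne']
  rw [integral_pos_iff_support_of_nonneg (fun x => mul_nonneg (hf x) (hg x).le) hfg, hsupp]
  exact (integral_pos_iff_support_of_nonneg hf hf_int).mp hf_pos

section DifferentiationUnderIntegral

variable {X : Type*} [MeasurableSpace X] {η : Measure X} {F F' : ℝ → X → ℝ}

/- `F' y` is the pointwise limit of the measurable difference quotients `n (F (y + 1/n) - F y)`. -/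
theorem aestronglyMeasurable_of_hasDerivAt (hF : ∀ y, AEStronglyMeasurable (F y) η)
    (hF' : ∀ x y, HasDerivAt (F · x) (F' y x) y) (y : ℝ) :
    AEStronglyMeasurable (F' y) η := by
  have hstep : Tendsto (fun n : ℕ => (n : ℝ)⁻¹) atTop (𝓝[>] 0) :=
    tendsto_inv_atTop_nhdsGT_zero.comp tendsto_natCast_atTop_atTop
  refine aestronglyMeasurable_of_tendsto_ae atTop
    (f := fun (n : ℕ) x => (n : ℝ)⁻¹⁻¹ • (F (y + (n : ℝ)⁻¹) x - F y x))
    (fun n => ((hF (y + (n : ℝ)⁻¹)).sub (hF y)).const_smul (n : ℝ)⁻¹⁻¹) (Eventually.of_forall fun x => ?_)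
  exact (hF' x y).tendsto_slope_zero_right.comp hstep

variable {bound : X → ℝ} (hF' : ∀ x y, HasDerivAt (F · x) (F' y x) y)
  (hbound : ∀ y x, |F' y x| ≤ bound x) (hbound_int : Integrable bound η)
include hF' hbound hbound_int

theorem integrable_of_hasDerivAt_of_dominated (hF : ∀ y, AEStronglyMeasurable (F y) η)
    (y : ℝ) : Integrable (F' y) η :=
  hbound_int.mono' (aestronglyMeasurable_of_hasDerivAt hF hF' y)
    (Eventually.of_forall fun x => hbound y x)

theorem hasDerivAt_integral_of_hasDerivAt_of_dominated (hF : ∀ y, Integrable (F y) η)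
    (y : ℝ) : HasDerivAt (fun y => ∫ x, F y x ∂η) (∫ x, F' y x ∂η) y :=
  (hasDerivAt_integral_of_dominated_loc_of_deriv_le (Metric.ball_mem_nhds y one_pos)
    (Eventually.of_forall fun z => (hF z).aestronglyMeasurable) (hF y)
    (aestronglyMeasurable_of_hasDerivAt (fun z => (hF z).aestronglyMeasurable) hF' y)
    (Eventually.of_forall fun x z _ => hbound z x) hbound_int
    (Eventually.of_forall fun x z _ => hF' x z)).2

end DifferentiationUnderIntegral

theorem louis_identity_statespace_observation
    {X : Type*} [MeasurableSpace X] (η : Measure X)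
    (predd : X → ℝ) (g : ℝ → X → ℝ)
    (hpred_nonneg : ∀ x, 0 ≤ predd x) (hpred_prob : ∫ x, predd x ∂η = 1)
    (hg_pos : ∀ y x, 0 < g y x)
    (hg_smooth : ∀ x, ContDiff ℝ 2 (fun y => g y x))
    (hg_int : ∀ y, Integrable (fun x => predd x * g y x) η)
    (h3 h4 : X → ℝ) (h3_int : Integrable h3 η) (h4_int : Integrable h4 η)
    (hdom3 : ∀ y x, |predd x * deriv (fun z => g z x) y| ≤ h3 x)
    (hdom4 : ∀ y x, |predd x * deriv (deriv (fun z => g z x)) y| ≤ h4 x)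
    (y₀ : ℝ) :
    deriv (deriv (fun y => Real.log (∫ x, predd x * g y x ∂η))) y₀ +
        (deriv (fun y => Real.log (∫ x, predd x * g y x ∂η)) y₀) ^ 2 =
      ∫ x, (deriv (deriv (fun y => Real.log (g y x))) y₀ +
          (deriv (fun y => Real.log (g y x)) y₀) ^ 2) *
        (predd x * g y₀ x / ∫ x', predd x' * g y₀ x' ∂η) ∂η := by
  set p : ℝ → ℝ := fun y => ∫ x, predd x * g y x ∂η
  have hg' : ∀ x y, HasDerivAt (fun z => predd x * g z x)
      (predd x * deriv (fun z => g z x) y) y := fun x y =>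
    (((hg_smooth x).differentiable two_ne_zero) y).hasDerivAt.const_mul _
  have hg'' : ∀ x y, HasDerivAt (fun z => predd x * deriv (fun z => g z x) z)
      (predd x * deriv (deriv (fun z => g z x)) y) y := fun x y =>
    (((hg_smooth x).differentiable_deriv_two) y).hasDerivAt.const_mul _
  have hp' := hasDerivAt_integral_of_hasDerivAt_of_dominated hg' hdom3 h3_int hg_int
  have hp'' := hasDerivAt_integral_of_hasDerivAt_of_dominated hg'' hdom4 h4_int
    (integrable_of_hasDerivAt_of_dominated hg' hdom3 h3_int fun y => (hg_int y).1)
  have hp_pos : ∀ y, 0 < p y := fun y =>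
    integral_mul_pos_of_integral_pos hpred_nonneg (hpred_prob ▸ one_pos) (hg_pos y) (hg_int y)
  rw [deriv_deriv_log_add_sq_deriv_log
    (Eventually.of_forall fun y => ⟨hp' y, (hp_pos y).ne'⟩) (hp'' y₀), ← integral_div]
  refine integral_congr_ae (Eventually.of_forall fun x => ?_)
  dsimp only
  rw [deriv_deriv_log_add_sq_deriv_log_of_contDiff (hg_smooth x) (fun y => (hg_pos y x).ne')]
  field_simp [(hg_pos y₀ x).ne', (hp_pos y₀).ne']
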